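/- arXiv:1905.02010 — 2 statements merged into one kernel-verified Lean document; each statement's English description precedes it below -/
import Mathlib

section
/- For any table r and any lists of attributes X and Y: r satisfies the order dependency X ↦→ Y if and only if r satisfies the order dependency X ↦→ X ++ Y and r satisfies the order compatibility X ~ Y (that is, 'OD = FD + OCD'). -/
/-- `ordLE X t s` : the lexicographic weak order `t ≼_X s` induced by a list
of attributes `X` (each attribute is a function `τ → ℤ`). -/
def ordLE {τ : Type*} : List (τ → ℤ) → τ → τ → Prop
  | [], _, _ => True
  | A :: T, t, s => A t < A s ∨ (A t = A s ∧ ordLE T t s)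

/-- The table `r` satisfies the order dependency (OD) `X ↦→ Y`. -/
def satOD {τ : Type*} (r : List τ) (X Y : List (τ → ℤ)) : Prop :=
  ∀ t ∈ r, ∀ s ∈ r, ordLE X t s → ordLE Y t s

/-- `X` and `Y` are order equivalent over `r` (`X ↔ Y`). -/
def orderEquiv {τ : Type*} (r : List τ) (X Y : List (τ → ℤ)) : Prop :=
  satOD r X Y ∧ satOD r Y X

/-- `X` and `Y` are order compatible over `r` (the OCD `X ~ Y`). -/
def satOCD {τ : Type*} (r : List τ) (X Y : List (τ → ℤ)) : Prop :=
  orderEquiv r (X ++ Y) (Y ++ X)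

/-- The table `r` satisfies the functional dependency (FD) `X → Y`. -/
def satFD {τ : Type*} (r : List τ) (X Y : Finset (τ → ℤ)) : Prop :=
  ∀ t ∈ r, ∀ s ∈ r, (∀ A ∈ X, A t = A s) → ∀ B ∈ Y, B t = B s

/-- Attribute `A` is a constant in the context `Z` over `r`
(the set-based canonical OD `Z : [] ↦→ A`). -/
def constIn {τ : Type*} [DecidableEq (τ → ℤ)] (r : List τ) (Z : Finset (τ → ℤ))
    (A : τ → ℤ) : Prop :=
  ∀ Zp : List (τ → ℤ), Zp.Nodup → Zp.toFinset = Z → satOD r Zp (Zp ++ [A])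

/-- Attributes `A` and `B` are order compatible in the context `Z` over `r`
(the set-based canonical OCD `Z : A ~ B`). -/
def ocIn {τ : Type*} [DecidableEq (τ → ℤ)] (r : List τ) (Z : Finset (τ → ℤ))
    (A B : τ → ℤ) : Prop :=
  ∀ Zp : List (τ → ℤ), Zp.Nodup → Zp.toFinset = Z → satOCD r (Zp ++ [A]) (Zp ++ [B])

/-! The order `≼_(X ++ Y)` compares by `X` and breaks `X`-ties by `Y`. Hence `X ↦→ X ++ Y`
followed by `X ++ Y ↦→ Y ++ X` yields `X ↦→ Y`. Conversely, if `X ↦→ Y`, then `Y ++ X` still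
refines `X`: were `t ≼_(Y ++ X) s` but not `t ≼_X s`, totality would give `s ≼_X t`, hence
`s ≼_Y t`, so `t` and `s` agree on `Y` and the tie is broken by `X` in favour of `t ≼_X s`. -/

section
variable {τ : Type*}

lemma ordLE_append_iff (X Y : List (τ → ℤ)) (t s : τ) :
    ordLE (X ++ Y) t s ↔ ordLE X t s ∧ ((∀ A ∈ X, A t = A s) → ordLE Y t s) := by
  induction X with
  | nil => simp [ordLE]
  | cons A T ih =>
    simp only [List.cons_append, ordLE, ih, List.forall_mem_cons]
    constructor
    · rintro (hlt | ⟨heq, hT, hY⟩)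
      · exact ⟨Or.inl hlt, fun h => absurd h.1 hlt.ne⟩
      · exact ⟨Or.inr ⟨heq, hT⟩, fun h => hY h.2⟩
    · rintro ⟨hlt | ⟨heq, hT⟩, hY⟩
      · exact Or.inl hlt
      · exact Or.inr ⟨heq, hT, fun h => hY ⟨heq, h⟩⟩

lemma ordLE_of_ordLE_append {X Y : List (τ → ℤ)} {t s : τ} (h : ordLE (X ++ Y) t s) :
    ordLE X t s :=
  ((ordLE_append_iff X Y t s).mp h).1

lemma ordLE_append_of_ordLE {X Y : List (τ → ℤ)} {t s : τ} (hX : ordLE X t s)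
    (hY : ordLE Y t s) : ordLE (X ++ Y) t s :=
  (ordLE_append_iff X Y t s).mpr ⟨hX, fun _ => hY⟩

lemma ordLE_total (X : List (τ → ℤ)) (t s : τ) : ordLE X t s ∨ ordLE X s t := by
  induction X with
  | nil => exact Or.inl trivial
  | cons A T ih =>
    rcases lt_trichotomy (A t) (A s) with hlt | heq | hgt
    · exact Or.inl (Or.inl hlt)
    · exact ih.imp (fun h => Or.inr ⟨heq, h⟩) (fun h => Or.inr ⟨heq.symm, h⟩)
    · exact Or.inr (Or.inl hgt)

lemma forall_eq_of_ordLE_of_ordLE {X : List (τ → ℤ)} {t s : τ} (hts : ordLE X t s)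
    (hst : ordLE X s t) : ∀ A ∈ X, A t = A s := by
  induction X with
  | nil => simp
  | cons A T ih =>
    rcases hts with hlt | ⟨heq, hT⟩
    · rcases hst with hgt | ⟨heq', -⟩
      · exact absurd (hlt.trans hgt) (lt_irrefl _)
      · exact absurd heq'.symm hlt.ne
    · rcases hst with hgt | ⟨-, hT'⟩
      · exact absurd heq hgt.ne'
      · exact List.forall_mem_cons.mpr ⟨heq, ih hT hT'⟩

variable {r : List τ} {X Y Z : List (τ → ℤ)}

lemma satOD.trans (hXY : satOD r X Y) (hYZ : satOD r Y Z) : satOD r X Z :=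
  fun t ht s hs h => hYZ t ht s hs (hXY t ht s hs h)

lemma satOD_append_left : satOD r (X ++ Y) X :=
  fun _ _ _ _ => ordLE_of_ordLE_append

lemma satOD.self_append (h : satOD r X Y) : satOD r X (X ++ Y) :=
  fun t ht s hs hX => ordLE_append_of_ordLE hX (h t ht s hs hX)

lemma satOD.append_swap (h : satOD r X Y) : satOD r (X ++ Y) (Y ++ X) :=
  fun t ht s hs hXY =>
    have hX := ordLE_of_ordLE_append hXY
    ordLE_append_of_ordLE (h t ht s hs hX) hX

lemma satOD.prepend_codomain (h : satOD r X Y) : satOD r (Y ++ X) X := by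
  intro t ht s hs hYX
  obtain ⟨hY, htie⟩ := (ordLE_append_iff Y X t s).mp hYX
  refine (ordLE_total X t s).elim id fun hX => htie ?_
  exact fun A hA => (forall_eq_of_ordLE_of_ordLE (h s hs t ht hX) hY A hA).symm

lemma satOD.satOCD (h : satOD r X Y) : satOCD r X Y :=
  ⟨h.append_swap, fun t ht s hs hYX =>
    ordLE_append_of_ordLE (h.prepend_codomain t ht s hs hYX) (ordLE_of_ordLE_append hYX)⟩

end

theorem stmt_2 {τ : Type*} (r : List τ) (X Y : List (τ → ℤ)) :
    satOD r X Y ↔ satOD r X (X ++ Y) ∧ satOCD r X Y :=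
  ⟨fun h => ⟨h.self_append, h.satOCD⟩,
    fun ⟨hFD, hOCD, _⟩ => (hFD.trans hOCD).trans satOD_append_left⟩
end

section
/- For any table r and any lists of attributes X = [X₁, …, X_n] and Y = [Y₁, …, Y_m]: r satisfies the order dependency X ↦→ Y if and only if (a) for every attribute A occurring in Y, A is a constant in the context set(X) over r, and (b) for all indices 1 ≤ i ≤ n and 1 ≤ j ≤ m, attributes X_i and Y_j are order compatible in the context {X₁, …, X_{i−1}} ∪ {Y₁, …, Y_{j−1}} over r. -/
theorem List.forall_mem_iff_of_toFinset_eq {α : Type*} [DecidableEq α] {l : List α}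
    {Z : Finset α} (h : l.toFinset = Z) {p : α → Prop} : (∀ a ∈ l, p a) ↔ ∀ a ∈ Z, p a := by
  subst h
  simp

theorem List.eq_take_append_get_cons_drop {α : Type*} (X : List α) (i : Fin X.length) :
    X = X.take i ++ X.get i :: X.drop (i + 1) := by
  conv_lhs => rw [← List.take_append_drop i X]
  rw [List.get_eq_getElem, List.getElem_cons_drop]

section ordLE

variable {τ : Type*} {X P Q : List (τ → ℤ)} {t s : τ}

theorem ordLE_of_forall_eq (h : ∀ A ∈ X, A t = A s) : ordLE X t s := by
  induction X with
  | nil => trivial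
  | cons A T ih =>
    rw [List.forall_mem_cons] at h
    exact Or.inr ⟨h.1, ih h.2⟩

theorem ordLE_append_of_forall_eq (h : ∀ A ∈ P, A t = A s) :
    ordLE (P ++ Q) t s ↔ ordLE Q t s := by
  induction P with
  | nil => rfl
  | cons A T ih =>
    rw [List.forall_mem_cons] at h
    simp only [List.cons_append, ordLE, h.1, lt_irrefl, false_or, true_and, ih h.2]

theorem ordLE_append_of_not_forall_eq (h : ¬ ∀ A ∈ P, A t = A s) :
    ordLE (P ++ Q) t s ↔ ordLE P t s := by
  induction P with
  | nil => simp at h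
  | cons A T ih =>
    rw [List.forall_mem_cons, not_and_or] at h
    by_cases hA : A t = A s
    · simp only [List.cons_append, ordLE, hA, lt_irrefl, false_or, true_and]
      exact ih (h.resolve_left (not_not.2 hA))
    · simp only [List.cons_append, ordLE, hA, false_and, or_false]

theorem exists_first_ne_of_not_forall_eq (h : ¬ ∀ A ∈ X, A t = A s) :
    ∃ i : Fin X.length, (∀ A ∈ X.take i, A t = A s) ∧ X.get i t ≠ X.get i s := by
  induction X with
  | nil => simp at h
  | cons A T ih =>
    by_cases hA : A t = A s
    · have hT : ¬ ∀ B ∈ T, B t = B s := fun hT => h (List.forall_mem_cons.2 ⟨hA, hT⟩)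
      obtain ⟨i, hprefix, hne⟩ := ih hT
      refine ⟨i.succ, ?_, hne⟩
      simpa only [Fin.val_succ, List.take_succ_cons, List.forall_mem_cons] using ⟨hA, hprefix⟩
    · exact ⟨⟨0, by simp⟩, by simp, hA⟩

theorem ordLE_iff_of_first_ne {i : Fin X.length} (hprefix : ∀ A ∈ X.take i, A t = A s)
    (hne : X.get i t ≠ X.get i s) : ordLE X t s ↔ X.get i t < X.get i s := by
  have h := ordLE_append_of_forall_eq (Q := X.get i :: X.drop (i + 1)) hprefix
  rw [← X.eq_take_append_get_cons_drop i] at h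
  rw [h]
  simp only [ordLE, hne, false_and, or_false]

theorem ordLE_antisymm (hts : ordLE X t s) (hst : ordLE X s t) : ∀ A ∈ X, A t = A s := by
  by_contra h
  obtain ⟨i, hprefix, hne⟩ := exists_first_ne_of_not_forall_eq h
  have hlt := (ordLE_iff_of_first_ne hprefix hne).1 hts
  have hgt := (ordLE_iff_of_first_ne (fun A hA => (hprefix A hA).symm) hne.symm).1 hst
  exact lt_asymm hlt hgt

theorem ordLE_pair_swap {A B : τ → ℤ} (hswap : ¬(A t < A s ∧ B s < B t))
    (h : ordLE [A, B] t s) : ordLE [B, A] t s := by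
  simp only [ordLE, and_true] at h ⊢
  omega

theorem ordLE_context_pair_of_forall_eq {A B : τ → ℤ} (h : ∀ C ∈ X, C t = C s) :
    ordLE ((X ++ [A]) ++ (X ++ [B])) t s ↔ ordLE [A, B] t s := by
  rw [List.append_assoc, ordLE_append_of_forall_eq h, List.singleton_append]
  simp only [ordLE, ordLE_append_of_forall_eq h]

theorem ordLE_context_pair_of_not_forall_eq {A B : τ → ℤ} (h : ¬ ∀ C ∈ X, C t = C s) :
    ordLE ((X ++ [A]) ++ (X ++ [B])) t s ↔ ordLE X t s := by
  rw [List.append_assoc, ordLE_append_of_not_forall_eq h]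

end ordLE

section Dependencies

variable {τ : Type*} {r : List τ}

theorem satOD_context_pair {Z : List (τ → ℤ)} {A B : τ → ℤ}
    (h : ∀ t ∈ r, ∀ s ∈ r, (∀ C ∈ Z, C t = C s) → ¬(A t < A s ∧ B s < B t)) :
    satOD r ((Z ++ [A]) ++ (Z ++ [B])) ((Z ++ [B]) ++ (Z ++ [A])) := by
  intro t ht s hs hts
  by_cases hZ : ∀ C ∈ Z, C t = C s
  · rw [ordLE_context_pair_of_forall_eq hZ] at hts ⊢
    exact ordLE_pair_swap (h t ht s hs hZ) hts
  · rwa [ordLE_context_pair_of_not_forall_eq hZ] at hts ⊢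

theorem satFD_of_satOD {X Y : List (τ → ℤ)} [DecidableEq (τ → ℤ)] (h : satOD r X Y) :
    satFD r X.toFinset Y.toFinset := by
  intro t ht s hs hX
  rw [← List.forall_mem_iff_of_toFinset_eq rfl] at hX ⊢
  exact ordLE_antisymm (h t ht s hs (ordLE_of_forall_eq hX))
    (h s hs t ht (ordLE_of_forall_eq fun A hA => (hX A hA).symm))

variable [DecidableEq (τ → ℤ)] {Z : Finset (τ → ℤ)} {A B : τ → ℤ}

theorem constIn_iff_satFD : constIn r Z A ↔ satFD r Z {A} := by
  constructor
  · intro h t ht s hs hZ B hB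
    rw [Finset.mem_singleton.1 hB]
    rw [← List.forall_mem_iff_of_toFinset_eq Z.toList_toFinset] at hZ
    have hts := h Z.toList Z.nodup_toList Z.toList_toFinset t ht s hs (ordLE_of_forall_eq hZ)
    have hst := h Z.toList Z.nodup_toList Z.toList_toFinset s hs t ht
      (ordLE_of_forall_eq fun C hC => (hZ C hC).symm)
    rw [ordLE_append_of_forall_eq hZ] at hts
    rw [ordLE_append_of_forall_eq fun C hC => (hZ C hC).symm] at hst
    simp only [ordLE, and_true] at hts hst
    omega
  · intro h Zp _ hZp t ht s hs hts
    by_cases hagree : ∀ C ∈ Zp, C t = C s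
    · rw [ordLE_append_of_forall_eq hagree]
      have hA := h t ht s hs ((List.forall_mem_iff_of_toFinset_eq hZp).1 hagree) A
        (Finset.mem_singleton_self A)
      exact Or.inr ⟨hA, trivial⟩
    · rwa [ordLE_append_of_not_forall_eq hagree]

theorem ocIn_iff :
    ocIn r Z A B ↔ ∀ t ∈ r, ∀ s ∈ r, (∀ C ∈ Z, C t = C s) → ¬(A t < A s ∧ B s < B t) := by
  constructor
  · rintro h t ht s hs hZ ⟨hA, hB⟩
    rw [← List.forall_mem_iff_of_toFinset_eq Z.toList_toFinset] at hZ
    have hBA := (h Z.toList Z.nodup_toList Z.toList_toFinset).1 t ht s hs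
      ((ordLE_context_pair_of_forall_eq hZ).2 (Or.inl hA))
    rw [ordLE_context_pair_of_forall_eq hZ] at hBA
    simp only [ordLE, and_true] at hBA
    omega
  · intro h Zp _ hZp
    subst hZp
    simp only [List.mem_toFinset] at h
    exact ⟨satOD_context_pair h,
      satOD_context_pair fun t ht s hs hZ hBA =>
        h s hs t ht (fun C hC => (hZ C hC).symm) hBA.symm⟩

variable {X Y : List (τ → ℤ)}

theorem constIn_of_satOD (h : satOD r X Y) (hA : A ∈ Y) : constIn r X.toFinset A :=
  constIn_iff_satFD.2 fun t ht s hs hX B hB =>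
    satFD_of_satOD h t ht s hs hX B (List.mem_toFinset.2 (Finset.mem_singleton.1 hB ▸ hA))

theorem ocIn_of_satOD (h : satOD r X Y) (i : Fin X.length) (j : Fin Y.length) :
    ocIn r ((X.take i).toFinset ∪ (Y.take j).toFinset) (X.get i) (Y.get j) := by
  rw [ocIn_iff]
  rintro t ht s hs hprefix ⟨hXi, hYj⟩
  simp only [Finset.mem_union, List.mem_toFinset, or_imp, forall_and] at hprefix
  have hX : ordLE X t s := (ordLE_iff_of_first_ne hprefix.1 hXi.ne).2 hXi
  exact lt_asymm hYj ((ordLE_iff_of_first_ne hprefix.2 hYj.ne').1 (h t ht s hs hX))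

theorem satOD_of_constIn_of_ocIn (hconst : ∀ A ∈ Y, constIn r X.toFinset A)
    (hoc : ∀ (i : Fin X.length) (j : Fin Y.length),
      ocIn r ((X.take i).toFinset ∪ (Y.take j).toFinset) (X.get i) (Y.get j)) :
    satOD r X Y := by
  intro t ht s hs hX
  by_cases hXeq : ∀ A ∈ X, A t = A s
  · exact ordLE_of_forall_eq fun A hA => constIn_iff_satFD.1 (hconst A hA) t ht s hs
      (fun B hB => hXeq B (List.mem_toFinset.1 hB)) A (Finset.mem_singleton_self A)
  by_cases hYeq : ∀ A ∈ Y, A t = A s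
  · exact ordLE_of_forall_eq hYeq
  obtain ⟨i, hXprefix, hXne⟩ := exists_first_ne_of_not_forall_eq hXeq
  obtain ⟨j, hYprefix, hYne⟩ := exists_first_ne_of_not_forall_eq hYeq
  have hXi := (ordLE_iff_of_first_ne hXprefix hXne).1 hX
  have hno_swap := ocIn_iff.1 (hoc i j) t ht s hs (by
    simp only [Finset.mem_union, List.mem_toFinset, or_imp, forall_and]
    exact ⟨hXprefix, hYprefix⟩)
  exact (ordLE_iff_of_first_ne hYprefix hYne).2
    (lt_of_le_of_ne (not_lt.1 fun hYj => hno_swap ⟨hXi, hYj⟩) hYne)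

end Dependencies

theorem stmt_5 {τ : Type*} [DecidableEq (τ → ℤ)] (r : List τ) (X Y : List (τ → ℤ)) :
    satOD r X Y ↔
      (∀ A ∈ Y, constIn r X.toFinset A) ∧
      (∀ (i : Fin X.length) (j : Fin Y.length),
        ocIn r ((X.take i).toFinset ∪ (Y.take j).toFinset) (X.get i) (Y.get j)) :=
  ⟨fun h => ⟨fun A => constIn_of_satOD h, ocIn_of_satOD h⟩,
    fun h => satOD_of_constIn_of_ocIn h.1 h.2⟩
end
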